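/- For i ≥ 2 and 0 ≤ j ≤ i, let the inclination function be F_{i,j}(I) := Σ_{l=0}^{min(j, ⌊i/2⌋)} ((−1)^{j−l−⌊i/2⌋} / 2^{2i−2l}) · ((2i−2l)! / (l!(i−l)!(i−2l)!)) · C(i−2l, j−l) · sin^{i−2l} I. Then for i even, F_{i,i−j}(I) = F_{i,j}(I). -/
import Mathlib


open Finset

/-- Kaula's inclination function for the zonal problem, Eq. (KaulaF):
`F_{i,j}(I) = Σ_{l=0}^{min(j, ⌊i/2⌋)} ((−1)^{j−l−⌊i/2⌋} / 2^{2i−2l})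
  ((2i−2l)! / (l!(i−l)!(i−2l)!)) C(i−2l, j−l) sin^{i−2l} I`. -/
noncomputable def Fincl (i j : ℕ) (I : ℝ) : ℝ :=
  ∑ l ∈ Finset.range (min j (i / 2) + 1),
    ((-1 : ℝ) ^ ((j : ℤ) - l - i / 2) / 2 ^ (2 * i - 2 * l)) *
      ((Nat.factorial (2 * i - 2 * l) : ℝ) /
        ((Nat.factorial l : ℝ) * (Nat.factorial (i - l) : ℝ) *
          (Nat.factorial (i - 2 * l) : ℝ))) *
      (Nat.choose (i - 2 * l) (j - l) : ℝ) * Real.sin I ^ (i - 2 * l)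

noncomputable def FinclTerm (i j l : ℕ) (I : ℝ) : ℝ :=
  ((-1 : ℝ) ^ ((j : ℤ) - l - i / 2) / 2 ^ (2 * i - 2 * l)) *
    ((Nat.factorial (2 * i - 2 * l) : ℝ) /
      ((Nat.factorial l : ℝ) * (Nat.factorial (i - l) : ℝ) *
        (Nat.factorial (i - 2 * l) : ℝ))) *
    (Nat.choose (i - 2 * l) (j - l) : ℝ) * Real.sin I ^ (i - 2 * l)

lemma Fincl_trunc (i j : ℕ) (I : ℝ) :
    Fincl i j I = ∑ l ∈ Finset.range (min j (min (i - j) (i / 2)) + 1), FinclTerm i j l I := by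
  rw [Fincl]
  symm
  apply Finset.sum_subset
  · intro x hx
    simp only [Finset.mem_range] at *
    omega
  · intro x hx hx'
    simp only [Finset.mem_range] at hx hx'
    have h2 : i - 2 * x < j - x := by omega
    rw [FinclTerm, Nat.choose_eq_zero_of_lt h2]
    push_cast
    ring

theorem Fincl_symm_even (i j : ℕ) (hi : 2 ≤ i) (hieven : Even i) (hj : j ≤ i) (I : ℝ) :
    Fincl i (i - j) I = Fincl i j I := by
  rw [Fincl_trunc i (i - j) I, Fincl_trunc i j I, show i - (i - j) = j by omega,
    show min (i - j) (min j (i / 2)) = min j (min (i - j) (i / 2)) by omega]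
  apply Finset.sum_congr rfl
  intro l hl
  simp only [Finset.mem_range] at hl
  have hlj : l ≤ j := by omega
  have hlij : l ≤ i - j := by omega
  have hl2 : 2 * l ≤ i := by omega
  unfold FinclTerm
  have hch : Nat.choose (i - 2 * l) (i - j - l) = Nat.choose (i - 2 * l) (j - l) := by
    rw [show i - j - l = (i - 2 * l) - (j - l) by omega]
    exact Nat.choose_symm (by omega)
  have hsign : (-1 : ℝ) ^ (((i - j : ℕ) : ℤ) - l - (i : ℤ) / 2)
      = (-1 : ℝ) ^ ((j : ℤ) - l - (i : ℤ) / 2) := by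
    obtain ⟨m, hm⟩ := hieven
    have he : (((i - j : ℕ) : ℤ) - l - (i : ℤ) / 2)
        = ((j : ℤ) - l - (i : ℤ) / 2) + 2 * ((m : ℤ) - j) := by
      have : ((i - j : ℕ) : ℤ) = (i : ℤ) - j := by push_cast [hj]; ring
      rw [this]
      omega
    rw [he, zpow_add₀ (by norm_num : (-1 : ℝ) ≠ 0), zpow_mul]
    norm_num
  rw [hch, hsign]
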